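/- arXiv:1611.01291 — 4 statements merged into one kernel-verified Lean document; each statement's English description precedes it below -/
import Mathlib

section
/- Let B be any n×n matrix over 𝔽₂ and let P be a uniformly random n×n permutation matrix. Then the expected size of the kernel of B + P is at most n + 1. -/
/-!
Exchanging the two sums, `∑_σ |ker (B + P_σ)|` counts, for each `x ∈ 𝔽₂ⁿ`, the permutations
with `P_σ x = B x`, i.e. `σ • x = B x` for the action `σ • x = x ∘ σ⁻¹`. Such a set is empty or
a coset of the stabiliser of `x`, so by Burnside's lemma the total is at most `n!` times the
number of orbits of `Sₙ` on `𝔽₂ⁿ`, and these orbits are the `n + 1` Hamming-weight classes.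
-/

open Finset MulAction Matrix

attribute [local instance] arrowAction

section OrbitCounting

variable {G X : Type*} [Group G] [MulAction G X] [Fintype G] [DecidableEq X]

theorem card_filter_smul_eq_le_card_filter_smul_eq_self (x y : X) :
    #{g : G | g • x = y} ≤ #{g : G | g • x = x} := by
  by_cases hy : ∃ g₀ : G, g₀ • x = y
  · obtain ⟨g₀, rfl⟩ := hy
    refine card_le_card_of_injOn (g₀⁻¹ * ·) (fun g hg => ?_) fun g _ h _ hgh => ?_
    · simp only [coe_filter, mem_univ, true_and, Set.mem_ofPred_eq] at hg ⊢
      rw [mul_smul, hg, inv_smul_smul]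
    · exact mul_left_cancel hgh
  · push Not at hy
    simp [filter_false_of_mem fun g _ => hy g]

variable [Fintype X]

theorem sum_card_filter_smul_eq_self :
    ∑ x : X, #{g : G | g • x = x} = Nat.card (orbitRel.Quotient G X) * Fintype.card G := by
  classical
  rw [Nat.card_eq_fintype_card, ← sum_card_fixedBy_eq_card_orbits_mul_card_group G X]
  simp only [card_filter, Fintype.card_subtype, mem_fixedBy]
  exact sum_comm

theorem sum_card_filter_smul_eq_le (f : X → X) :
    ∑ x : X, #{g : G | g • x = f x} ≤ Nat.card (orbitRel.Quotient G X) * Fintype.card G :=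
  (sum_le_sum fun x _ => card_filter_smul_eq_le_card_filter_smul_eq_self x (f x)).trans_eq
    sum_card_filter_smul_eq_self

end OrbitCounting

theorem exists_perm_comp_eq_of_card_fiber_eq {α β : Type*} [Fintype α] [DecidableEq β]
    {x y : α → β} (h : ∀ b, #{i | x i = b} = #{i | y i = b}) :
    ∃ σ : Equiv.Perm α, y ∘ σ = x :=
  ⟨Equiv.ofFiberEquiv fun b => Fintype.equivOfCardEq <| by
      simpa only [Fintype.card_subtype] using h b,
    funext (Equiv.ofFiberEquiv_map _)⟩

theorem card_filter_eq_zero_zmod_two {α : Type*} [Fintype α] (z : α → ZMod 2) :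
    #{i | z i = 0} = Fintype.card α - #{i | z i = 1} := by
  rw [← card_univ, ← card_filter_add_card_filter_not (s := univ) (fun i => z i = 1),
    Nat.add_sub_cancel_left]
  congr! 3 with i _
  generalize z i = a
  revert a
  decide

theorem card_orbitRel_quotient_perm_zmod_two_le {α : Type*} [Fintype α] :
    Nat.card (orbitRel.Quotient (Equiv.Perm α) (α → ZMod 2)) ≤ Fintype.card α + 1 := by
  classical
  let weight (x : α → ZMod 2) : Fin (Fintype.card α + 1) :=
    ⟨#{i | x i = 1}, Nat.lt_succ_of_le (card_filter_le _ _)⟩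
  suffices h : ∀ x y, weight x = weight y → x ∈ orbit (Equiv.Perm α) y by
    refine (Nat.card_le_card_of_injective (fun ω : orbitRel.Quotient _ _ => weight ω.out)
      fun ω₁ ω₂ hω => ?_).trans_eq (Nat.card_fin _)
    rw [← ω₁.out_eq, ← ω₂.out_eq]
    exact Quotient.sound (h _ _ hω)
  intro x y hxy
  have hone : #{i | x i = 1} = #{i | y i = 1} := congrArg Fin.val hxy
  obtain ⟨σ, hσ⟩ := exists_perm_comp_eq_of_card_fiber_eq (x := y) (y := x) fun b => by
    obtain rfl | rfl : b = 0 ∨ b = 1 := by revert b; decide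
    · rw [card_filter_eq_zero_zmod_two, card_filter_eq_zero_zmod_two, hone]
    · exact hone.symm
  exact ⟨σ, funext fun i => by rw [← hσ]; exact congrArg x (σ.apply_symm_apply i)⟩

theorem Matrix.of_ite_apply_eq_permMatrix_inv {n R : Type*} [DecidableEq n] [Zero R] [One R]
    (σ : Equiv.Perm n) :
    Matrix.of (fun i j => if σ j = i then (1 : R) else 0) = (σ⁻¹).permMatrix R := by
  ext i j
  simp only [of_apply, PEquiv.toMatrix_apply, Equiv.toPEquiv_apply, Option.mem_def,
    Option.some_inj, Equiv.Perm.inv_def, Equiv.symm_apply_eq]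
  exact if_congr eq_comm rfl rfl

theorem Matrix.add_permMatrix_mulVec_eq_zero_iff {n R : Type*} [Fintype n] [DecidableEq n]
    [CommRing R] [CharP R 2] (B : Matrix n n R) (σ : Equiv.Perm n) (x : n → R) :
    (B + (σ⁻¹).permMatrix R) *ᵥ x = 0 ↔ σ • x = B *ᵥ x := by
  rw [add_mulVec, permMatrix_mulVec, funext_iff, funext_iff]
  exact forall_congr' fun i => CharTwo.add_eq_zero.trans eq_comm

/-- For any B ∈ 𝔽₂^{n×n} and a uniformly random permutation matrix P,
the expected size of the kernel of B + P is at most n + 1. -/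
theorem stmt1 (n : ℕ) (B : Matrix (Fin n) (Fin n) (ZMod 2)) :
    (∑ σ : Equiv.Perm (Fin n),
        ((Finset.univ.filter (fun x : Fin n → ZMod 2 =>
          (B + Matrix.of (fun i j => if σ j = i then (1 : ZMod 2) else 0)).mulVec x = 0)).card : ℝ))
      / (Nat.factorial n : ℝ) ≤ n + 1 := by
  rw [div_le_iff₀ (by positivity)]
  have hcount := calc
    ∑ σ : Equiv.Perm (Fin n), #{x | (B + of fun i j => if σ j = i then 1 else 0) *ᵥ x = 0}
      = ∑ σ : Equiv.Perm (Fin n), #{x | σ • x = B *ᵥ x} := by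
        simp_rw [of_ite_apply_eq_permMatrix_inv, add_permMatrix_mulVec_eq_zero_iff]
    _ = ∑ x, #{σ : Equiv.Perm (Fin n) | σ • x = B *ᵥ x} :=
        sum_card_bipartiteAbove_eq_sum_card_bipartiteBelow _
    _ ≤ Nat.card (orbitRel.Quotient (Equiv.Perm (Fin n)) (Fin n → ZMod 2)) * n.factorial := by
        simpa only [Fintype.card_perm, Fintype.card_fin] using
          sum_card_filter_smul_eq_le (G := Equiv.Perm (Fin n)) (B *ᵥ ·)
    _ ≤ (n + 1) * n.factorial := by
        simpa using Nat.mul_le_mul_right _ (card_orbitRel_quotient_perm_zmod_two_le (α := Fin n))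
  exact_mod_cast hcount
end

section
/- For all real n ≥ 2 and integers t ≥ 0, u ≥ 0 with u ≤ n/2: 2^{−u} · Σ_{s=0}^{u} C(u,s) (1 − 2s/n)^t ≤ ((1 + (1 − 2/n)^t)/2)^u. -/
open Finset

/-- for real n ≥ 2 and integers t, u ≥ 0 with u ≤ n/2,
2^{−u} Σ_{s=0}^{u} C(u,s)(1 − 2s/n)^t ≤ ((1 + (1 − 2/n)^t)/2)^u. -/
theorem stmt8 (n : ℝ) (hn : 2 ≤ n) (t u : ℕ) (hu : (u : ℝ) ≤ n / 2) :
    (∑ s ∈ Finset.range (u + 1), (u.choose s : ℝ) * (1 - 2 * s / n) ^ t) / 2 ^ u ≤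
      ((1 + (1 - 2 / n) ^ t) / 2) ^ u := by
  have hn0 : (0 : ℝ) < n := by linarith
  set x : ℝ := (1 - 2 / n) ^ t with hx
  have hx0 : (0 : ℝ) ≤ 1 - 2 / n := by
    rw [sub_nonneg, div_le_one hn0]; linarith
  have key : (∑ s ∈ Finset.range (u + 1), (u.choose s : ℝ) * (1 - 2 * s / n) ^ t)
      ≤ (1 + x) ^ u := by
    have hexp : (1 + x) ^ u = ∑ s ∈ Finset.range (u + 1),
        (u.choose s : ℝ) * x ^ s := by
      rw [add_comm, add_pow]
      refine Finset.sum_congr rfl fun s _ => by ring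
    rw [hexp]
    refine Finset.sum_le_sum fun s hs => ?_
    have hs' : (s : ℝ) ≤ n / 2 := by
      have : s ≤ u := Nat.lt_succ_iff.mp (Finset.mem_range.mp hs)
      exact le_trans (by exact_mod_cast this) hu
    have h1 : (0 : ℝ) ≤ 1 - 2 * s / n := by
      rw [sub_nonneg, div_le_one hn0]; linarith
    have h2 : 1 - 2 * s / n ≤ (1 - 2 / n) ^ s := by
      have := one_add_mul_le_pow (a := -(2 / n)) (by
        have : 2 / n ≤ 1 := by rw [div_le_one hn0]; linarith
        linarith) s
      calc 1 - 2 * s / n = 1 + s * (-(2 / n)) := by ring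
        _ ≤ (1 + -(2 / n)) ^ s := this
        _ = (1 - 2 / n) ^ s := by ring_nf
    have : (1 - 2 * s / n) ^ t ≤ ((1 - 2 / n) ^ s) ^ t :=
      pow_le_pow_left₀ h1 h2 t
    have hxs : ((1 - 2 / n) ^ s) ^ t = x ^ s := by
      rw [hx, ← pow_mul, ← pow_mul, Nat.mul_comm]
    refine mul_le_mul_of_nonneg_left ?_ (by positivity)
    rw [← hxs]; exact this
  calc (∑ s ∈ Finset.range (u + 1), (u.choose s : ℝ) * (1 - 2 * s / n) ^ t) / 2 ^ u
      ≤ (1 + x) ^ u / 2 ^ u := by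
        apply div_le_div_of_nonneg_right key (by positivity) |>.trans_eq rfl
    _ = ((1 + x) / 2) ^ u := by rw [div_pow]
end

section
/- For all real n ≥ 2 and integers t ≥ 1, if n/2 < u ≤ n, then 2^{−u} Σ_{s=⌈n/2⌉}^{u} C(u,s) (2s/n − 1)^t ≤ ((1 + (1 − 2/n)^t)/2)^u. -/
open Finset

/-- for real n ≥ 2, integer t ≥ 1 and n/2 < u ≤ n,
2^{−u} Σ_{s=⌈n/2⌉}^{u} C(u,s)(2s/n − 1)^t ≤ ((1 + (1 − 2/n)^t)/2)^u. -/
theorem stmt9 (n : ℝ) (hn : 2 ≤ n) (t : ℕ) (ht : 1 ≤ t) (u : ℕ)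
    (hu1 : n / 2 < (u : ℝ)) (hu2 : (u : ℝ) ≤ n) :
    (∑ s ∈ Finset.Icc ⌈n / 2⌉₊ u, (u.choose s : ℝ) * (2 * s / n - 1) ^ t) / 2 ^ u ≤
      ((1 + (1 - 2 / n) ^ t) / 2) ^ u := by
  have hn0 : (0:ℝ) < n := by linarith
  have hx0 : (0:ℝ) ≤ 1 - 2 / n := by
    have : 2 / n ≤ 1 := by
      rw [div_le_one hn0]; linarith
    linarith
  set x : ℝ := (1 - 2 / n) ^ t with hxdef
  have hx0' : (0:ℝ) ≤ x := pow_nonneg hx0 t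
  -- Step 1: bound each term
  have key : ∀ s ∈ Finset.Icc ⌈n / 2⌉₊ u,
      (u.choose s : ℝ) * (2 * s / n - 1) ^ t ≤ (u.choose s : ℝ) * x ^ (u - s) := by
    intro s hs
    rw [Finset.mem_Icc] at hs
    obtain ⟨hs1, hs2⟩ := hs
    have hsn : n / 2 ≤ (s : ℝ) := by
      calc n / 2 ≤ (⌈n / 2⌉₊ : ℝ) := Nat.le_ceil _
        _ ≤ (s : ℝ) := by exact_mod_cast hs1
    have hnonneg : (0:ℝ) ≤ 2 * s / n - 1 := by
      rw [sub_nonneg, le_div_iff₀ hn0]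
      linarith
    have hr : ((u - s : ℕ) : ℝ) = (u : ℝ) - (s : ℝ) := by
      push_cast [Nat.cast_sub hs2]; ring
    have h1 : 2 * s / n - 1 ≤ 1 + ((u - s : ℕ) : ℝ) * (-(2 / n)) := by
      rw [hr]
      have hpos : (0:ℝ) ≤ 2 * (n - u) / n := by
        apply div_nonneg _ (le_of_lt hn0)
        linarith
      have e : 1 + ((u:ℝ) - s) * (-(2 / n)) - (2 * (s:ℝ) / n - 1) = 2 * (n - u) / n := by
        field_simp
        ring
      linarith
    have h2 : 1 + ((u - s : ℕ) : ℝ) * (-(2 / n)) ≤ (1 - 2 / n) ^ (u - s) := by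
      have := one_add_mul_le_pow (a := -(2/n)) (by
        have : 2 / n ≤ 1 := by rw [div_le_one hn0]; linarith
        linarith) (u - s)
      have e : (1 : ℝ) + -(2 / n) = 1 - 2 / n := by ring
      rw [e] at this
      exact this
    have h3 : 2 * s / n - 1 ≤ (1 - 2 / n) ^ (u - s) := le_trans h1 h2
    have h4 : (2 * s / n - 1) ^ t ≤ ((1 - 2 / n) ^ (u - s)) ^ t :=
      pow_le_pow_left₀ hnonneg h3 t
    have h5 : ((1 - 2 / n) ^ (u - s)) ^ t = x ^ (u - s) := by
      rw [hxdef, ← pow_mul, ← pow_mul, Nat.mul_comm]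
    rw [h5] at h4
    exact mul_le_mul_of_nonneg_left h4 (Nat.cast_nonneg _)
  have step1 := Finset.sum_le_sum key
  -- Step 2: extend sum
  have step2 : ∑ s ∈ Finset.Icc ⌈n / 2⌉₊ u, (u.choose s : ℝ) * x ^ (u - s) ≤
      ∑ s ∈ Finset.range (u + 1), (u.choose s : ℝ) * x ^ (u - s) := by
    apply Finset.sum_le_sum_of_subset_of_nonneg
    · intro s hs
      rw [Finset.mem_Icc] at hs
      rw [Finset.mem_range]
      omega
    · intro i _ _
      positivity
  have step3 : ∑ s ∈ Finset.range (u + 1), (u.choose s : ℝ) * x ^ (u - s) = (1 + x) ^ u := by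
    rw [add_pow]
    apply Finset.sum_congr rfl
    intro s hs
    rw [Finset.mem_range] at hs
    rw [one_pow]
    ring
  have total : (∑ s ∈ Finset.Icc ⌈n / 2⌉₊ u, (u.choose s : ℝ) * (2 * s / n - 1) ^ t)
      ≤ (1 + x) ^ u := by
    calc _ ≤ _ := step1
      _ ≤ _ := step2
      _ = _ := step3
  rw [div_le_iff₀ (by positivity : (0:ℝ) < 2 ^ u)]
  calc _ ≤ (1 + x) ^ u := total
    _ = ((1 + x) / 2) ^ u * 2 ^ u := by
        rw [div_pow, div_mul_cancel₀]
        positivity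
end

section
/- The number of well-increasing sequences u₁, …, u_ℓ in 𝔽₂ⁿ is at most C(n, ≤ 4ℓn/k) · 2^{4ℓ²n/k}, where C(n, ≤ m) = Σ_{j=0}^{m} C(n,j). In particular, for n ≥ k it is at most k^{4ℓn/k} · 2^{4ℓ²n/k}. -/
/-!
The new parts `u i \ (u 0 ∪ ⋯ ∪ u (i-1))` are the `disjointed` pieces of `u`: they are pairwise
disjoint with union `u 0 ∪ ⋯ ∪ u (ℓ-1)`, so a well-increasing sequence has a union `U` of size at
most `4ℓn/k`. A sequence is determined by `U` and the `ℓ` subsets `u i ⊆ U`, which gives the first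
bound. For the second, `∑_{j ≤ m} C(n, j) ≤ (e n / m) ^ m` with `m = ⌊4ℓn/k⌋` (compare
`(1 + m/n) ^ n ≤ e ^ m` termwise), and `e n ≤ k m`; when `k = 1` the trivial count `2 ^ (nℓ)`
suffices.
-/

open Finset

/-- A sequence u₁,…,u_ℓ of subsets of [n] is well-increasing (with parameter k) if
n/k ≤ |u_i \ (u₁∪⋯∪u_{i−1})| ≤ 4n/k for all i. -/
def WellIncreasing (n k : ℕ) {ℓ : ℕ} (u : Fin ℓ → Finset (Fin n)) : Prop :=
  ∀ i : Fin ℓ,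
    (n : ℝ) / k ≤ ((u i \ (Finset.univ.filter (· < i)).biUnion u).card : ℝ) ∧
    ((u i \ (Finset.univ.filter (· < i)).biUnion u).card : ℝ) ≤ 4 * n / k

section Disjointed

variable {ι α : Type*} [Fintype ι] [LinearOrder ι] [LocallyFiniteOrderBot ι] [DecidableEq α]

theorem Finset.card_sup_eq_sum_card_disjointed (t : ι → Finset α) :
    #(univ.sup t) = ∑ i, #(disjointed t i) := by
  rw [← Fintype.sup_disjointed, sup_eq_biUnion,
    card_biUnion ((disjoint_disjointed t).set_pairwise _)]

theorem Finset.sdiff_biUnion_filter_lt_eq_disjointed (t : ι → Finset α) (i : ι) :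
    t i \ (univ.filter (· < i)).biUnion t = disjointed t i := by
  rw [disjointed_apply, filter_gt_eq_Iio, sup_eq_biUnion]

end Disjointed

theorem WellIncreasing.card_sup_le {n k ℓ : ℕ} {u : Fin ℓ → Finset (Fin n)}
    (hu : WellIncreasing n k u) : (#(univ.sup u) : ℝ) ≤ 4 * ℓ * n / k := by
  rw [card_sup_eq_sum_card_disjointed, Nat.cast_sum]
  calc ∑ i, (#(disjointed u i) : ℝ) ≤ ∑ _ : Fin ℓ, (4 * n / k : ℝ) :=
        sum_le_sum fun i _ ↦ sdiff_biUnion_filter_lt_eq_disjointed u i ▸ (hu i).2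
    _ = 4 * ℓ * n / k := by simp only [sum_const, card_univ, Fintype.card_fin, nsmul_eq_mul]; ring

theorem Finset.card_filter_card_sup_le_le {ι α : Type*} [Fintype ι] [DecidableEq ι] [Fintype α]
    [DecidableEq α] (m : ℕ) :
    #{u : ι → Finset α | #(univ.sup u) ≤ m} ≤
      (∑ j ∈ range (m + 1), (Fintype.card α).choose j) * 2 ^ (m * Fintype.card ι) := by
  have hcover : ({u : ι → Finset α | #(univ.sup u) ≤ m} : Finset _) ⊆
      (range (m + 1)).biUnion fun j ↦
        (powersetCard j univ).biUnion fun U ↦ Fintype.piFinset fun _ ↦ U.powerset := by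
    intro u hu
    simp only [mem_filter, mem_univ, true_and] at hu
    simp only [mem_biUnion, mem_range, mem_powersetCard, Fintype.mem_piFinset, mem_powerset]
    exact ⟨_, Nat.lt_succ_of_le hu, _, ⟨subset_univ _, rfl⟩, fun i ↦ le_sup (mem_univ i)⟩
  calc _ ≤ _ := card_le_card hcover
    _ ≤ ∑ j ∈ range (m + 1), ∑ U ∈ powersetCard j (univ : Finset α),
          #(Fintype.piFinset fun _ : ι ↦ U.powerset) :=
        card_biUnion_le.trans (sum_le_sum fun _ _ ↦ card_biUnion_le)
    _ ≤ ∑ j ∈ range (m + 1), (Fintype.card α).choose j * 2 ^ (m * Fintype.card ι) := by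
        refine sum_le_sum fun j hj ↦ ?_
        rw [← card_univ, ← card_powersetCard]
        refine sum_le_card_nsmul _ _ _ fun U hU ↦ ?_
        rw [Fintype.card_piFinset, prod_const, card_univ, card_powerset,
          (mem_powersetCard.1 hU).2, ← pow_mul]
        exact Nat.pow_le_pow_right two_pos
          (Nat.mul_le_mul_right _ (Nat.lt_succ_iff.1 (mem_range.1 hj)))
    _ = _ := (sum_mul ..).symm

theorem sum_range_choose_le_exp_mul_div_pow {n m : ℕ} (hm : 0 < m) (hmn : m ≤ n) :
    ∑ j ∈ range (m + 1), (n.choose j : ℝ) ≤ (Real.exp 1 * n / m) ^ m := by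
  have hn : (0 : ℝ) < n := by exact_mod_cast hm.trans_le hmn
  set t : ℝ := m / n with ht
  have ht0 : 0 < t := by positivity
  have ht1 : t ≤ 1 := div_le_one_of_le₀ (by exact_mod_cast hmn) hn.le
  have key : (∑ j ∈ range (m + 1), (n.choose j : ℝ)) * t ^ m ≤ Real.exp 1 ^ m := calc
    _ ≤ ∑ j ∈ range (m + 1), t ^ j * n.choose j := by
        rw [sum_mul]
        refine sum_le_sum fun j hj ↦ ?_
        rw [mul_comm]
        exact mul_le_mul_of_nonneg_right
          (pow_le_pow_of_le_one ht0.le ht1 (Nat.lt_succ_iff.1 (mem_range.1 hj))) (by positivity)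
    _ ≤ ∑ j ∈ range (n + 1), t ^ j * n.choose j :=
        sum_le_sum_of_subset_of_nonneg (range_subset_range.2 (by omega)) fun _ _ _ ↦ by positivity
    _ = (t + 1) ^ n := by simp only [add_pow, one_pow, mul_one]
    _ ≤ Real.exp t ^ n := pow_le_pow_left₀ (by positivity) (Real.add_one_le_exp t) n
    _ = Real.exp 1 ^ m := by rw [← Real.exp_nat_mul, ← Real.exp_nat_mul, ht]; field_simp
  rwa [← le_div_iff₀ (by positivity), ← div_pow, ht, div_div_eq_mul_div] at key

theorem sum_range_choose_floor_le_rpow {n k : ℕ} {x : ℝ} (hk : 2 ≤ k) (hx : 3 * n + k ≤ k * x) :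
    ∑ j ∈ range (⌊x⌋₊ + 1), (n.choose j : ℝ) ≤ (k : ℝ) ^ x := by
  have hk2 : (2 : ℝ) ≤ k := by exact_mod_cast hk
  have hx1 : 1 ≤ x := by nlinarith [(Nat.cast_nonneg n : (0 : ℝ) ≤ n)]
  set m := ⌊x⌋₊
  suffices ∑ j ∈ range (m + 1), (n.choose j : ℝ) ≤ (k : ℝ) ^ m by
    refine this.trans ?_
    rw [← Real.rpow_natCast]
    exact Real.rpow_le_rpow_of_exponent_le (by linarith) (Nat.floor_le (by linarith))
  rcases le_or_gt m n with hmn | hnm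
  · refine (sum_range_choose_le_exp_mul_div_pow (Nat.floor_pos.2 hx1) hmn).trans
      (pow_le_pow_left₀ (by positivity) ?_ m)
    -- `e n < 3 n ≤ k (x - 1) < k m`
    rw [div_le_iff₀ (by exact_mod_cast Nat.floor_pos.2 hx1)]
    nlinarith [Real.exp_one_lt_three, Nat.lt_floor_add_one x, (Nat.cast_nonneg n : (0 : ℝ) ≤ n)]
  · have hsum : ∑ j ∈ range (m + 1), n.choose j = 2 ^ n := by
      rw [← Nat.sum_range_choose]
      exact (sum_subset (range_subset_range.2 (by omega))
        fun j _ hj ↦ Nat.choose_eq_zero_of_lt (by simpa using hj)).symm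
    calc ∑ j ∈ range (m + 1), (n.choose j : ℝ) = 2 ^ n := by exact_mod_cast hsum
      _ ≤ (k : ℝ) ^ n := pow_le_pow_left₀ zero_le_two hk2 n
      _ ≤ (k : ℝ) ^ m := pow_le_pow_right₀ (by linarith) hnm.le

theorem card_wellIncreasing_le (n k ℓ : ℕ) :
    (Nat.card {u : Fin ℓ → Finset (Fin n) // WellIncreasing n k u} : ℝ) ≤
      (∑ j ∈ range (⌊(4 * ℓ * n : ℝ) / k⌋₊ + 1), (n.choose j : ℝ)) *
        2 ^ ((4 * ℓ ^ 2 * n : ℝ) / k) := by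
  classical
  set m := ⌊(4 * ℓ * n : ℝ) / k⌋₊
  have hcount : Nat.card {u : Fin ℓ → Finset (Fin n) // WellIncreasing n k u} ≤
      (∑ j ∈ range (m + 1), n.choose j) * 2 ^ (m * ℓ) := by
    rw [Nat.card_eq_fintype_card, Fintype.card_subtype]
    calc _ ≤ #{u : Fin ℓ → Finset (Fin n) | #(univ.sup u) ≤ m} :=
          card_le_card (monotone_filter_right _ fun _ _ hu ↦ Nat.le_floor hu.card_sup_le)
      _ ≤ _ := by simpa using card_filter_card_sup_le_le (ι := Fin ℓ) (α := Fin n) m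
  have hexp : (m : ℝ) * ℓ ≤ 4 * ℓ ^ 2 * n / k := calc
    (m : ℝ) * ℓ ≤ 4 * ℓ * n / k * ℓ := by
      gcongr; exact Nat.floor_le (by positivity)
    _ = _ := by ring
  calc _ ≤ ((∑ j ∈ range (m + 1), n.choose j : ℕ) : ℝ) * (2 : ℝ) ^ ((m * ℓ : ℕ) : ℝ) := by
        rw [Real.rpow_natCast]; exact_mod_cast hcount
    _ ≤ _ := by push_cast; gcongr; exact one_le_two

theorem stmt14_general (n k ℓ : ℕ) :
    (Nat.card {u : Fin ℓ → Finset (Fin n) // WellIncreasing n k u} : ℝ) ≤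
        (∑ j ∈ Finset.range (⌊(4 * ℓ * n : ℝ) / k⌋₊ + 1), (n.choose j : ℝ)) *
          (2 : ℝ) ^ ((4 * ℓ ^ 2 * n : ℝ) / k) ∧
      (k ≤ n →
        (Nat.card {u : Fin ℓ → Finset (Fin n) // WellIncreasing n k u} : ℝ) ≤
          (k : ℝ) ^ ((4 * ℓ * n : ℝ) / k) * (2 : ℝ) ^ ((4 * ℓ ^ 2 * n : ℝ) / k)) := by
  have hfirst := card_wellIncreasing_le n k ℓ
  refine ⟨hfirst, fun hkn ↦ ?_⟩
  by_cases hdeg : ℓ = 0 ∨ k = 0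
  · rcases hdeg with rfl | rfl <;> simpa using hfirst
  obtain rfl | hk : k = 1 ∨ 2 ≤ k := by omega
  · calc (Nat.card {u : Fin ℓ → Finset (Fin n) // WellIncreasing n 1 u} : ℝ)
        ≤ Nat.card (Fin ℓ → Finset (Fin n)) := by
          exact_mod_cast Nat.card_le_card_of_injective _ Subtype.val_injective
      _ = (2 : ℝ) ^ (n * ℓ) := by simp [pow_mul]
      _ ≤ _ := by
          rw [Nat.cast_one, Real.one_rpow, one_mul, div_one, ← Real.rpow_natCast]
          refine Real.rpow_le_rpow_of_exponent_le one_le_two ?_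
          exact_mod_cast (by nlinarith [Nat.le_self_pow two_ne_zero ℓ] : n * ℓ ≤ 4 * ℓ ^ 2 * n)
  · refine hfirst.trans (mul_le_mul_of_nonneg_right
      (sum_range_choose_floor_le_rpow hk ?_) (by positivity))
    have hℓ : (1 : ℝ) ≤ ℓ := by exact_mod_cast Nat.one_le_iff_ne_zero.2 (not_or.1 hdeg).1
    rw [mul_div_cancel₀ _ (by positivity)]
    nlinarith [(by exact_mod_cast hkn : (k : ℝ) ≤ n)]

/-- the number of well-increasing sequences is at most
C(n, ≤ 4ℓn/k) · 2^{4ℓ²n/k}; in particular for n ≥ k at most k^{4ℓn/k} · 2^{4ℓ²n/k}. -/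
theorem stmt14 (n k ℓ : ℕ) (hk : 0 < k) :
    (Nat.card {u : Fin ℓ → Finset (Fin n) // WellIncreasing n k u} : ℝ) ≤
        (∑ j ∈ Finset.range (⌊(4 * ℓ * n : ℝ) / k⌋₊ + 1), (n.choose j : ℝ)) *
          (2 : ℝ) ^ ((4 * ℓ ^ 2 * n : ℝ) / k) ∧
      (k ≤ n →
        (Nat.card {u : Fin ℓ → Finset (Fin n) // WellIncreasing n k u} : ℝ) ≤
          (k : ℝ) ^ ((4 * ℓ * n : ℝ) / k) * (2 : ℝ) ^ ((4 * ℓ ^ 2 * n : ℝ) / k)) :=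
  stmt14_general n k ℓ
end
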